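/- There exists a constant C > 0 such that for every measurable kernel K : [1,∞) × (0,1/2] → ℂ satisfying |K(t,r)| ≤ e^{−ρt} t^{−1} r^{−(α+1/2)} for all t ≥ 1 and 0 < r ≤ 1/2, and every measurable f on (0,1/2], one has ( ∫₁^∞ | ∫₀^{1/2} K(t,r) f(r) Δ(r) dr |² Δ(t) dt )^{1/2} ≤ C · ∫₀^∞ μ({ r ∈ (0,1/2] : |f(r)| > s })^{1/p₀} ds. (The right-hand side is, up to a constant, the Lorentz L^{p₀,1}(dμ) norm of f; this is the endpoint L^{p₀,1} → L² bound for the operator S_{4,*}.) -/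

import Mathlib

open MeasureTheory Real Set

/-- The Jacobi weight `Δ(t) = (2 sinh t)^(2α+1) (2 cosh t)^(2β+1)`. -/
noncomputable def Δj (α β : ℝ) (t : ℝ) : ℝ :=
  (2 * Real.sinh t) ^ (2 * α + 1) * (2 * Real.cosh t) ^ (2 * β + 1)

/-- The measure `dμ = Δ(t) dt`. -/
noncomputable def μj (α β : ℝ) : Measure ℝ :=
  MeasureTheory.volume.withDensity fun t => ENNReal.ofReal (Δj α β t)

/-!
For `t ≥ 1` the kernel bound gives `|∫ K(t,r) f(r) dμ(r)| ≤ e^{-ρt} t⁻¹ I(f)` with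
`I(f) = ∫₀^{1/2} |f(r)| r^{-(α+1/2)} dμ(r)`, and since `Δ(t) ≤ 2^{2β+1} e^{2ρt}` the `L²(μ)` norm
on `[1, ∞)` is at most `2^{β+1/2} I(f) (∫₁^∞ t⁻² dt)^{1/2}`. By the layer-cake formula, `I(f)` is
bounded by the Lorentz quantity once `∫_E r^{-(α+1/2)} dμ ≲ μ(E)^{1/p₀}` for every
`E ⊆ (0, 1/2]`. Since `Δ(r) ≲ r^{2α+1}` near `0`, this is the bathtub estimate: split `E` at
the radius `ε` with `ε^{2α+2} = μ(E)` and bound `r^{-(α+1/2)}` by `ε^{-(α+1/2)}` on the far part.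
-/

open scoped ENNReal

lemma two_sinh_le_exp (t : ℝ) : 2 * sinh t ≤ exp t := by
  linarith [sinh_lt_cosh (x := t), cosh_add_sinh t]

lemma cosh_le_exp {t : ℝ} (ht : 0 ≤ t) : cosh t ≤ exp t := by
  linarith [sinh_nonneg_iff.mpr ht, cosh_add_sinh t]

lemma sinh_le_mul_exp (r : ℝ) : sinh r ≤ r * exp r := by
  have h : exp (-r) = exp (-(2 * r)) * exp r := by rw [← exp_add]; ring_nf
  rw [sinh_eq, h]
  nlinarith [add_one_le_exp (-(2 * r)), exp_pos r]

section Weight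

variable {α β : ℝ}

lemma Δj_nonneg {t : ℝ} (ht : 0 ≤ t) : 0 ≤ Δj α β t :=
  mul_nonneg (rpow_nonneg (by linarith [sinh_nonneg_iff.mpr ht]) _)
    (rpow_nonneg (by linarith [cosh_pos t]) _)

@[fun_prop]
lemma measurable_Δj : Measurable (Δj α β) := by
  unfold Δj; fun_prop

lemma Δj_le_rpow_mul_rpow (hα : -(1/2) ≤ α) (hβ : -(1/2) ≤ β) {t s c : ℝ} (ht : 0 ≤ t)
    (hs : 2 * sinh t ≤ s) (hc : 2 * cosh t ≤ c) :
    Δj α β t ≤ s ^ (2 * α + 1) * c ^ (2 * β + 1) := by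
  have hsinh : 0 ≤ 2 * sinh t := by linarith [sinh_nonneg_iff.mpr ht]
  have hcosh : 0 ≤ 2 * cosh t := by linarith [cosh_pos t]
  exact mul_le_mul (rpow_le_rpow hsinh hs (by linarith)) (rpow_le_rpow hcosh hc (by linarith))
    (rpow_nonneg hcosh _) (rpow_nonneg (hsinh.trans hs) _)

lemma Δj_le_two_rpow_mul_exp (hα : -(1/2) ≤ α) (hβ : -(1/2) ≤ β) {t : ℝ} (ht : 0 ≤ t) :
    Δj α β t ≤ 2 ^ (2 * β + 1) * exp (2 * (α + β + 1) * t) := by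
  refine (Δj_le_rpow_mul_rpow hα hβ ht (two_sinh_le_exp t) (c := 2 * exp t)
    (by linarith [cosh_le_exp ht])).trans_eq ?_
  rw [mul_rpow zero_le_two (exp_pos t).le, ← exp_mul, ← exp_mul, mul_left_comm, ← exp_add]
  ring_nf

lemma exp_neg_sq_mul_Δj_le (hα : -(1/2) ≤ α) (hβ : -(1/2) ≤ β) {t : ℝ} (ht : 0 ≤ t) :
    exp (-(α + β + 1) * t) ^ 2 * Δj α β t ≤ 2 ^ (2 * β + 1) := by
  calc exp (-(α + β + 1) * t) ^ 2 * Δj α β t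
      ≤ exp (-(α + β + 1) * t) ^ 2 * (2 ^ (2 * β + 1) * exp (2 * (α + β + 1) * t)) := by
        gcongr; exact Δj_le_two_rpow_mul_exp hα hβ ht
    _ = 2 ^ (2 * β + 1) := by
        rw [← exp_nat_mul, mul_left_comm, ← exp_add]; ring_nf; simp

lemma Δj_le_mul_rpow (hα : -(1/2) ≤ α) (hβ : -(1/2) ≤ β) {r : ℝ} (hr : r ∈ Icc 0 1) :
    Δj α β r ≤ (2 * exp 1) ^ (2 * α + 1) * (2 * exp 1) ^ (2 * β + 1) * r ^ (2 * α + 1) := by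
  have hexp : exp r ≤ exp 1 := exp_le_exp.mpr hr.2
  refine (Δj_le_rpow_mul_rpow hα hβ hr.1 (s := 2 * exp 1 * r) (c := 2 * exp 1) ?_ ?_).trans_eq ?_
  · nlinarith [sinh_le_mul_exp r, mul_le_mul_of_nonneg_left hexp hr.1]
  · linarith [cosh_le_exp hr.1]
  · rw [mul_rpow (by positivity) hr.1]; ring

end Weight

lemma setLIntegral_Ioc_rpow {γ ε : ℝ} (hγ : -1 < γ) (hε : 0 ≤ ε) :
    ∫⁻ r in Ioc 0 ε, ENNReal.ofReal (r ^ γ) = ENNReal.ofReal (ε ^ (γ + 1) / (γ + 1)) := by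
  have hint : IntegrableOn (fun r : ℝ => r ^ γ) (Ioc 0 ε) := by
    have := intervalIntegral.intervalIntegrable_rpow' (a := 0) (b := ε) hγ
    rwa [intervalIntegrable_iff, uIoc_of_le hε] at this
  rw [← ofReal_integral_eq_lintegral_ofReal hint
    (ae_restrict_of_forall_mem measurableSet_Ioc fun r hr => rpow_nonneg hr.1.le _),
    ← intervalIntegral.integral_of_le hε, integral_rpow (Or.inl hγ),
    zero_rpow (by linarith), sub_zero]

section PowerWeight

variable {w : ℝ → ℝ≥0∞} {C γ δ : ℝ} {E : Set ℝ}

lemma setLIntegral_rpow_neg_le_add (hw : Measurable w) (hC : 0 ≤ C) (hδ : 0 ≤ δ)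
    (hδγ : δ < γ + 1) (hE : MeasurableSet E) (hE0 : E ⊆ Ioi 0)
    (hwE : ∀ r ∈ E, w r ≤ ENNReal.ofReal (C * r ^ γ)) {ε : ℝ} (hε : 0 < ε) :
    ∫⁻ r in E, ENNReal.ofReal (r ^ (-δ)) ∂volume.withDensity w ≤
      ENNReal.ofReal (C * (ε ^ (γ - δ + 1) / (γ - δ + 1))) +
        ENNReal.ofReal (ε ^ (-δ)) * volume.withDensity w E := by
  have hsplit : E = (E ∩ Iic ε) ∪ (E ∩ Ioi ε) := by
    rw [← inter_union_distrib_left, Iic_union_Ioi, inter_univ]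
  have hrpow : Measurable fun r : ℝ => ENNReal.ofReal (r ^ (-δ)) := by fun_prop
  have hsmall : ∫⁻ r in E ∩ Iic ε, ENNReal.ofReal (r ^ (-δ)) ∂volume.withDensity w ≤
      ENNReal.ofReal (C * (ε ^ (γ - δ + 1) / (γ - δ + 1))) := by
    rw [setLIntegral_withDensity_eq_setLIntegral_mul _ hw hrpow (hE.inter measurableSet_Iic)]
    calc ∫⁻ r in E ∩ Iic ε, w r * ENNReal.ofReal (r ^ (-δ))
        ≤ ∫⁻ r in E ∩ Iic ε, ENNReal.ofReal C * ENNReal.ofReal (r ^ (γ - δ)) := by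
          refine setLIntegral_mono (by fun_prop) fun r hr => ?_
          have hr0 : 0 < r := hE0 hr.1
          calc w r * ENNReal.ofReal (r ^ (-δ))
              ≤ ENNReal.ofReal (C * r ^ γ) * ENNReal.ofReal (r ^ (-δ)) := by
                gcongr; exact hwE r hr.1
            _ = ENNReal.ofReal C * ENNReal.ofReal (r ^ (γ - δ)) := by
                rw [← ENNReal.ofReal_mul (by positivity), ← ENNReal.ofReal_mul hC, mul_assoc,
                  ← rpow_add hr0, sub_eq_add_neg]
      _ ≤ ∫⁻ r in Ioc 0 ε, ENNReal.ofReal C * ENNReal.ofReal (r ^ (γ - δ)) :=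
          lintegral_mono_set fun r hr => ⟨hE0 hr.1, hr.2⟩
      _ = _ := by
          rw [lintegral_const_mul' _ _ ENNReal.ofReal_ne_top,
            setLIntegral_Ioc_rpow (by linarith) hε.le, ← ENNReal.ofReal_mul hC]
  have hlarge : ∫⁻ r in E ∩ Ioi ε, ENNReal.ofReal (r ^ (-δ)) ∂volume.withDensity w ≤
      ENNReal.ofReal (ε ^ (-δ)) * volume.withDensity w E :=
    calc ∫⁻ r in E ∩ Ioi ε, ENNReal.ofReal (r ^ (-δ)) ∂volume.withDensity w
        ≤ ∫⁻ _ in E ∩ Ioi ε, ENNReal.ofReal (ε ^ (-δ)) ∂volume.withDensity w :=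
          setLIntegral_mono measurable_const fun r hr =>
            ENNReal.ofReal_le_ofReal (rpow_le_rpow_of_nonpos hε hr.2.le (by linarith))
      _ ≤ _ := by
          rw [setLIntegral_const]; gcongr; exact inter_subset_left
  calc ∫⁻ r in E, ENNReal.ofReal (r ^ (-δ)) ∂volume.withDensity w
      ≤ ∫⁻ r in E ∩ Iic ε, ENNReal.ofReal (r ^ (-δ)) ∂volume.withDensity w +
          ∫⁻ r in E ∩ Ioi ε, ENNReal.ofReal (r ^ (-δ)) ∂volume.withDensity w := by
        conv_lhs => rw [hsplit]
        exact lintegral_union_le _ _ _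
    _ ≤ _ := add_le_add hsmall hlarge

lemma setLIntegral_rpow_neg_le_mul_rpow (hw : Measurable w) (hC : 0 ≤ C) (hδ : 0 ≤ δ)
    (hδγ : δ < γ + 1) (hE : MeasurableSet E) (hE0 : E ⊆ Ioi 0)
    (hwE : ∀ r ∈ E, w r ≤ ENNReal.ofReal (C * r ^ γ)) :
    ∫⁻ r in E, ENNReal.ofReal (r ^ (-δ)) ∂volume.withDensity w ≤
      ENNReal.ofReal (C / (γ - δ + 1) + 1) *
        volume.withDensity w E ^ ((γ - δ + 1) / (γ + 1)) := by
  set m := volume.withDensity w E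
  have hγ : γ + 1 ≠ 0 := by linarith
  have hγδ : 0 < γ - δ + 1 := by linarith
  have hθ : 0 < (γ - δ + 1) / (γ + 1) := div_pos hγδ (by linarith)
  have hcoef : 0 < C / (γ - δ + 1) + 1 := by positivity
  rcases eq_or_ne m 0 with hm0 | hm0
  · rw [setLIntegral_measure_zero _ _ hm0]; exact bot_le
  rcases eq_or_ne m ⊤ with hmtop | hmtop
  · rw [hmtop, ENNReal.top_rpow_of_pos hθ, ENNReal.mul_top (ENNReal.ofReal_pos.mpr hcoef).ne']
    exact le_top
  have hM : 0 < m.toReal := ENNReal.toReal_pos hm0 hmtop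
  set ε := m.toReal ^ (γ + 1)⁻¹
  have hε : 0 < ε := rpow_pos_of_pos hM _
  have hsmall : ε ^ (γ - δ + 1) = m.toReal ^ ((γ - δ + 1) / (γ + 1)) := by
    rw [← rpow_mul hM.le]; ring_nf
  have hlarge : ε ^ (-δ) * m.toReal = m.toReal ^ ((γ - δ + 1) / (γ + 1)) := by
    rw [← rpow_mul hM.le, ← rpow_add_one hM.ne']
    congr 1; field_simp; ring
  refine (setLIntegral_rpow_neg_le_add hw hC hδ hδγ hE hE0 hwE hε).trans_eq ?_
  change _ + _ * m = _
  rw [← ENNReal.ofReal_toReal hmtop, ← ENNReal.ofReal_mul (by positivity), hsmall, hlarge,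
    ← ENNReal.ofReal_add (by positivity) (by positivity),
    ENNReal.ofReal_rpow_of_pos hM, ← ENNReal.ofReal_mul (by positivity)]
  congr 1; field_simp

end PowerWeight

lemma setLIntegral_rpow_neg_μj_le {α β : ℝ} (hα : -(1/2) ≤ α) (hβ : -(1/2) ≤ β) {E : Set ℝ}
    (hE : MeasurableSet E) (hE1 : E ⊆ Ioc 0 1) :
    ∫⁻ r in E, ENNReal.ofReal (r ^ (-(α + 1/2))) ∂μj α β ≤
      ENNReal.ofReal ((2 * exp 1) ^ (2 * α + 1) * (2 * exp 1) ^ (2 * β + 1) / (α + 3/2) + 1) *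
        μj α β E ^ ((2 * α + 3) / (4 * α + 4)) := by
  have h := setLIntegral_rpow_neg_le_mul_rpow (γ := 2 * α + 1) (δ := α + 1/2)
    (by fun_prop) (by positivity) (by linarith) (by linarith) hE (hE1.trans Ioc_subset_Ioi_self)
    fun r hr => ENNReal.ofReal_le_ofReal (Δj_le_mul_rpow hα hβ (Ioc_subset_Icc_self (hE1 hr)))
  have hθ : (α + 3/2) / (2 * α + 1 + 1) = (2 * α + 3) / (4 * α + 4) := by
    rw [div_eq_div_iff (by linarith) (by linarith)]; ring
  rwa [show 2 * α + 1 - (α + 1/2) + 1 = α + 3/2 by ring, hθ] at h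

lemma setLIntegral_ofReal_mul_le_of_forall_setLIntegral_le {X : Type*} [MeasurableSpace X]
    {μ : Measure X} {S : Set X} {g : X → ℝ≥0∞} {φ : X → ℝ} {c : ℝ≥0∞} {θ : ℝ}
    (hS : MeasurableSet S) (hg : Measurable g) (hφ : Measurable φ) (hφ0 : 0 ≤ φ) (hc : c ≠ ⊤)
    (h : ∀ E ⊆ S, MeasurableSet E → ∫⁻ x in E, g x ∂μ ≤ c * μ E ^ θ) :
    ∫⁻ x in S, ENNReal.ofReal (φ x) * g x ∂μ ≤
      c * ∫⁻ s in Ioi 0, μ {x | x ∈ S ∧ s < φ x} ^ θ := by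
  set ν := (μ.restrict S).withDensity g
  have hlevel (s : ℝ) : ν {x | s < φ x} = ∫⁻ x in {x | x ∈ S ∧ s < φ x}, g x ∂μ := by
    have hs : MeasurableSet {x | s < φ x} := measurableSet_lt measurable_const hφ
    rw [withDensity_apply _ hs, Measure.restrict_restrict hs, inter_comm]
    rfl
  calc ∫⁻ x in S, ENNReal.ofReal (φ x) * g x ∂μ
      = ∫⁻ x, ENNReal.ofReal (φ x) ∂ν := by
        rw [lintegral_withDensity_eq_lintegral_mul _ hg (by fun_prop)]
        simp only [Pi.mul_apply, mul_comm]
    _ = ∫⁻ s in Ioi 0, ν {x | s < φ x} :=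
        lintegral_eq_lintegral_meas_lt ν (ae_of_all _ hφ0) hφ.aemeasurable
    _ ≤ ∫⁻ s in Ioi 0, c * μ {x | x ∈ S ∧ s < φ x} ^ θ := by
        refine lintegral_mono fun s => ?_
        rw [hlevel]
        exact h _ (fun x hx => hx.1) (hS.inter (measurableSet_lt measurable_const hφ))
    _ = c * ∫⁻ s in Ioi 0, μ {x | x ∈ S ∧ s < φ x} ^ θ := lintegral_const_mul' _ _ hc

lemma enorm_setIntegral_mul_ofReal_le {S : Set ℝ} {w g : ℝ → ℝ} {k f : ℝ → ℂ} {a : ℝ}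
    (hS : MeasurableSet S) (hw : Measurable w) (hg : Measurable g) (hf : Measurable f)
    (hw0 : ∀ r ∈ S, 0 ≤ w r) (ha : 0 ≤ a) (hk : ∀ r ∈ S, ‖k r‖ ≤ a * g r) :
    ‖∫ r in S, k r * f r * (w r : ℂ)‖ₑ ≤
      ENNReal.ofReal a * ∫⁻ r in S, ENNReal.ofReal ‖f r‖ * ENNReal.ofReal (g r)
        ∂volume.withDensity fun r => ENNReal.ofReal (w r) := by
  rw [setLIntegral_withDensity_eq_setLIntegral_mul _ (by fun_prop) (by fun_prop) hS,
    ← lintegral_const_mul' _ _ ENNReal.ofReal_ne_top]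
  refine (enorm_integral_le_lintegral_enorm _).trans (setLIntegral_mono (by fun_prop) ?_)
  intro r hr
  rw [Pi.mul_apply, ← ofReal_norm, ← ENNReal.ofReal_mul (by positivity),
    ← ENNReal.ofReal_mul (hw0 r hr), ← ENNReal.ofReal_mul ha]
  apply ENNReal.ofReal_le_ofReal
  calc ‖k r * f r * (w r : ℂ)‖ = ‖k r‖ * ‖f r‖ * w r := by
        rw [norm_mul, norm_mul, Complex.norm_of_nonneg (hw0 r hr)]
    _ ≤ a * g r * ‖f r‖ * w r := by
        gcongr
        · exact hw0 r hr
        · exact hk r hr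
    _ = a * (w r * (‖f r‖ * g r)) := by ring

lemma lintegral_Ici_one_rpow_neg_two :
    ∫⁻ t in Ici (1 : ℝ), ENNReal.ofReal (t ^ (-2 : ℝ)) = 1 := by
  rw [Measure.restrict_congr_set Ioi_ae_eq_Ici.symm, ← ofReal_integral_eq_lintegral_ofReal
      (integrableOn_Ioi_rpow_of_lt (by norm_num) one_pos)
      (ae_restrict_of_forall_mem measurableSet_Ioi fun t ht =>
        rpow_nonneg (one_pos.trans ht).le _),
    integral_Ioi_rpow_of_lt (by norm_num) one_pos]
  norm_num

lemma lintegral_Ici_norm_sq_mul_Δj_rpow_le {α β : ℝ} (hα : -(1/2) ≤ α) (hβ : -(1/2) ≤ β)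
    {F : ℝ → ℂ} {I : ℝ≥0∞}
    (hF : ∀ t, 1 ≤ t → ‖F t‖ₑ ≤ ENNReal.ofReal (exp (-(α + β + 1) * t) * t⁻¹) * I) :
    (∫⁻ t in Ici 1, ENNReal.ofReal (‖F t‖ ^ 2 * Δj α β t)) ^ (1 / (2 : ℝ)) ≤
      ENNReal.ofReal (2 ^ (2 * β + 1)) ^ (1 / (2 : ℝ)) * I := by
  have hpt : ∀ t ∈ Ici (1 : ℝ), ENNReal.ofReal (‖F t‖ ^ 2 * Δj α β t) ≤
      I ^ 2 * ENNReal.ofReal (2 ^ (2 * β + 1)) * ENNReal.ofReal (t ^ (-2 : ℝ)) := by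
    intro t (ht : 1 ≤ t)
    have ht0 : 0 < t := one_pos.trans_le ht
    calc ENNReal.ofReal (‖F t‖ ^ 2 * Δj α β t)
          = ‖F t‖ₑ ^ 2 * ENNReal.ofReal (Δj α β t) := by
          rw [ENNReal.ofReal_mul (by positivity), ENNReal.ofReal_pow (norm_nonneg _), ofReal_norm]
      _ ≤ (ENNReal.ofReal (exp (-(α + β + 1) * t) * t⁻¹) * I) ^ 2 *
            ENNReal.ofReal (Δj α β t) := by
          gcongr; exact hF t ht
      _ = I ^ 2 * ENNReal.ofReal ((exp (-(α + β + 1) * t) * t⁻¹) ^ 2 * Δj α β t) := by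
          rw [ENNReal.ofReal_mul (sq_nonneg _), ENNReal.ofReal_pow (by positivity)]
          ring
      _ = I ^ 2 * ENNReal.ofReal (exp (-(α + β + 1) * t) ^ 2 * Δj α β t * t ^ (-2 : ℝ)) := by
          rw [rpow_neg ht0.le, rpow_two]
          ring_nf
      _ ≤ I ^ 2 * ENNReal.ofReal (2 ^ (2 * β + 1) * t ^ (-2 : ℝ)) := by
          gcongr; exact exp_neg_sq_mul_Δj_le hα hβ ht0.le
      _ = _ := by rw [ENNReal.ofReal_mul (by positivity), mul_assoc]
  calc (∫⁻ t in Ici 1, ENNReal.ofReal (‖F t‖ ^ 2 * Δj α β t)) ^ (1 / (2 : ℝ))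
      ≤ (I ^ 2 * ENNReal.ofReal (2 ^ (2 * β + 1))) ^ (1 / (2 : ℝ)) := by
        gcongr
        refine (setLIntegral_mono (by fun_prop) hpt).trans_eq ?_
        rw [lintegral_const_mul _ (by fun_prop), lintegral_Ici_one_rpow_neg_two, mul_one]
    _ = _ := by
        rw [ENNReal.mul_rpow_of_nonneg _ _ (by norm_num), mul_comm, one_div,
          ← Nat.cast_ofNat, ENNReal.pow_rpow_inv_natCast two_ne_zero]

theorem stmt13 (α β : ℝ) (hβα : β < α) (hβ : -(1/2 : ℝ) < β) :
    ∃ C : ℝ, 0 < C ∧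
      ∀ K : ℝ → ℝ → ℂ, Measurable (Function.uncurry K) →
        (∀ t r : ℝ, 1 ≤ t → r ∈ Set.Ioc (0 : ℝ) (1/2) →
          ‖K t r‖ ≤ Real.exp (-(α + β + 1) * t) * t⁻¹ * r ^ (-(α + 1/2))) →
        ∀ f : ℝ → ℂ, Measurable f →
          (∫⁻ t in Set.Ici (1 : ℝ),
              ENNReal.ofReal
                (‖∫ r in Set.Ioc (0 : ℝ) (1/2), K t r * f r * ((Δj α β r : ℝ) : ℂ)‖ ^ 2 *
                  Δj α β t)) ^ (1 / (2 : ℝ)) ≤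
            ENNReal.ofReal C *
              ∫⁻ s in Set.Ioi (0 : ℝ),
                (μj α β {r : ℝ | r ∈ Set.Ioc (0 : ℝ) (1/2) ∧ s < ‖f r‖}) ^
                  (1 / ((4 * α + 4) / (2 * α + 3))) := by
  have hα : -(1/2 : ℝ) ≤ α := by linarith
  have hα' : 0 < α + 3/2 := by linarith
  set c := (2 * exp 1) ^ (2 * α + 1) * (2 * exp 1) ^ (2 * β + 1) / (α + 3/2) + 1
  refine ⟨(2 ^ (2 * β + 1)) ^ (1 / (2 : ℝ)) * c, by positivity, fun K _ hK f hf => ?_⟩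
  calc _ ≤ ENNReal.ofReal (2 ^ (2 * β + 1)) ^ (1 / (2 : ℝ)) *
          ∫⁻ r in Ioc 0 (1/2), ENNReal.ofReal ‖f r‖ * ENNReal.ofReal (r ^ (-(α + 1/2))) ∂μj α β :=
        lintegral_Ici_norm_sq_mul_Δj_rpow_le hα hβ.le fun t ht =>
          enorm_setIntegral_mul_ofReal_le measurableSet_Ioc measurable_Δj (by fun_prop) hf
            (fun r hr => Δj_nonneg hr.1.le) (by positivity) (fun r hr => hK t r ht hr)
    _ ≤ ENNReal.ofReal (2 ^ (2 * β + 1)) ^ (1 / (2 : ℝ)) * (ENNReal.ofReal c *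
          ∫⁻ s in Ioi 0, μj α β {r | r ∈ Ioc 0 (1/2) ∧ s < ‖f r‖} ^
            (1 / ((4 * α + 4) / (2 * α + 3)))) := by
        gcongr
        refine setLIntegral_ofReal_mul_le_of_forall_setLIntegral_le measurableSet_Ioc
          (by fun_prop) hf.norm (fun _ => norm_nonneg _) ENNReal.ofReal_ne_top fun E hES hE => ?_
        rw [one_div_div]
        exact setLIntegral_rpow_neg_μj_le hα hβ.le hE
          (hES.trans (Ioc_subset_Ioc_right (by norm_num)))
    _ = _ := by
        rw [ENNReal.ofReal_mul (by positivity), ENNReal.ofReal_rpow_of_nonneg (by positivity)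
          (by norm_num), mul_assoc]
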